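/- arXiv:2111.11550 — 5 statements merged into one kernel-verified Lean document; each statement's English description precedes it below -/
import Mathlib

section
/- Partitioning lemma (Lemma 1): Let E be a real normed vector space, let T ≥ 1, let z_1,…,z_T ∈ E, let V̄ > 0, and let V = ∑_{t=2}^T ‖z_t − z_{t−1}‖ be the path variation of the sequence. Then there exist M ≥ 1 and indices 0 = b_0 < b_1 < ⋯ < b_M = T partitioning {1,…,T} into M consecutive intervals [b_{i−1}+1, b_i] (i = 1,…,M) such that: (a) for every i, the within-interval variation satisfies ∑_{j=b_{i−1}+2}^{b_i} ‖z_j − z_{j−1}‖ ≤ V̄, and (b) M ≤ V/V̄ + 1. -/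
/-!
Greedy partitioning: starting from the left end, extend the current block as long as its
within-block variation stays at most `Vbar`. A block that is closed before the end of the
sequence loses this property as soon as it is extended by one index, so its variation together
with the next increment exceeds `Vbar`. These "extended blocks" are disjoint pieces of the
total variation `V`, and all blocks but the last are of this kind, whence `(M - 1) * Vbar ≤ V`.
-/

open Finset

theorem Finset.sum_Icc_add_one_consecutive {M : Type*} [AddCommMonoid M] (f : ℕ → M)
    {m n k : ℕ} (hmn : m ≤ n) (hnk : n ≤ k) :
    ∑ i ∈ Icc (m + 1) n, f i + ∑ i ∈ Icc (n + 1) k, f i = ∑ i ∈ Icc (m + 1) k, f i := by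
  simp only [Icc_add_one_left_eq_Ioc]
  exact sum_Ioc_consecutive f hmn hnk

section GreedyPartition

variable (d : ℕ → ℝ) {Vbar : ℝ}

theorem exists_maximal_block (hVbar : 0 ≤ Vbar) {a T : ℕ} (haT : a < T) :
    ∃ s, a < s ∧ s ≤ T ∧ ∑ j ∈ Icc (a + 2) s, d j ≤ Vbar ∧
      (s = T ∨ s < T ∧ Vbar < ∑ j ∈ Icc (a + 2) (s + 1), d j) := by
  classical
  let P : ℕ → Prop := fun s => ∑ j ∈ Icc (a + 2) s, d j ≤ Vbar
  let s := Nat.findGreatest P T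
  have h_empty : P (a + 1) := by simpa [P] using hVbar
  refine ⟨s, Nat.le_findGreatest haT h_empty, Nat.findGreatest_le T,
    Nat.findGreatest_spec haT h_empty, ?_⟩
  rcases (Nat.findGreatest_le T : s ≤ T).eq_or_lt with hsT | hsT
  · exact .inl hsT
  · exact .inr ⟨hsT, not_le.mp (Nat.findGreatest_is_greatest (Nat.lt_succ_self s) hsT)⟩

theorem exists_partition_sum_Icc_le (hd : ∀ j, 0 ≤ d j) (hVbar : 0 < Vbar) {a T : ℕ}
    (haT : a < T) :
    ∃ (M : ℕ) (b : ℕ → ℕ), 1 ≤ M ∧ b 0 = a ∧ b M = T ∧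
      (∀ i < M, b i < b (i + 1)) ∧
      (∀ i < M, ∑ j ∈ Icc (b i + 2) (b (i + 1)), d j ≤ Vbar) ∧
      ((M : ℝ) - 1) * Vbar ≤ ∑ j ∈ Icc (a + 2) T, d j := by
  obtain ⟨s, has, -, h_block, rfl | ⟨hsT, h_next⟩⟩ := exists_maximal_block d hVbar.le haT
  · refine ⟨1, fun i => if i = 0 then a else s, le_rfl, rfl, rfl, ?_, ?_, ?_⟩
    · simpa using has
    · simpa using h_block
    · simpa using sum_nonneg fun j _ => hd j
  · obtain ⟨M, b, hM, hb0, hbM, hb_mono, hb_block, hb_count⟩ :=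
      exists_partition_sum_Icc_le hd hVbar hsT
    refine ⟨M + 1, fun | 0 => a | i + 1 => b i, by omega, rfl, hbM, ?_, ?_, ?_⟩
    · rintro (_ | i) hi
      · simpa [hb0] using has
      · exact hb_mono i (by omega)
    · rintro (_ | i) hi
      · simpa [hb0] using h_block
      · exact hb_block i (by omega)
    · have h_split : ∑ j ∈ Icc (a + 2) (s + 1), d j + ∑ j ∈ Icc (s + 2) T, d j =
          ∑ j ∈ Icc (a + 2) T, d j :=
        sum_Icc_add_one_consecutive d (m := a + 1) (by omega) hsT
      push_cast
      linarith
termination_by T - a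

end GreedyPartition

theorem partitioning_lemma_general {E : Type*} [NormedAddCommGroup E]
    (T : ℕ) (hT : 1 ≤ T) (z : ℕ → E) (Vbar : ℝ) (hVbar : 0 < Vbar) :
    ∃ (M : ℕ) (b : ℕ → ℕ), 1 ≤ M ∧ b 0 = 0 ∧ b M = T ∧
      (∀ i < M, b i < b (i + 1)) ∧
      (∀ i < M, ∑ j ∈ Finset.Icc (b i + 2) (b (i + 1)), ‖z j - z (j - 1)‖ ≤ Vbar) ∧
      (M : ℝ) ≤ (∑ t ∈ Finset.Icc 2 T, ‖z t - z (t - 1)‖) / Vbar + 1 := by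
  obtain ⟨M, b, hM, hb0, hbM, hb_mono, hb_block, hb_count⟩ :=
    exists_partition_sum_Icc_le (fun j => ‖z j - z (j - 1)‖) (fun _ => norm_nonneg _) hVbar hT
  refine ⟨M, b, hM, hb0, hbM, hb_mono, hb_block, ?_⟩
  rw [← sub_le_iff_le_add, le_div_iff₀ hVbar]
  exact hb_count

/-- Partitioning lemma (Lemma 1): the sequence `z 1, …, z T` can be partitioned into
`M` consecutive intervals `[b (i-1) + 1, b i]` whose within-interval path variation is at
most `Vbar`, with `M ≤ V / Vbar + 1` where `V` is the total path variation. -/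
theorem partitioning_lemma {E : Type*} [NormedAddCommGroup E] [NormedSpace ℝ E]
    (T : ℕ) (hT : 1 ≤ T) (z : ℕ → E) (Vbar : ℝ) (hVbar : 0 < Vbar) :
    ∃ (M : ℕ) (b : ℕ → ℕ), 1 ≤ M ∧ b 0 = 0 ∧ b M = T ∧
      (∀ i < M, b i < b (i + 1)) ∧
      (∀ i < M, ∑ j ∈ Finset.Icc (b i + 2) (b (i + 1)), ‖z j - z (j - 1)‖ ≤ Vbar) ∧
      (M : ℝ) ≤ (∑ t ∈ Finset.Icc 2 T, ‖z t - z (t - 1)‖) / Vbar + 1 :=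
  partitioning_lemma_general T hT z Vbar hVbar
end

section
/- Lemma 2 (dynamic regret of strongly adaptive iterates, conditional form): Let E be a real normed vector space, D ⊆ E, T ≥ 1, G ≥ 0, R ≥ 0, and let f_1,…,f_T : E → ℝ each be G-Lipschitz on D. Let x_1,…,x_T ∈ D have uniform interval static regret at most R (i.e., for every 1 ≤ s ≤ e ≤ T and every u ∈ D, ∑_{t=s}^e (f_t(x_t) − f_t(u)) ≤ R). Then for every comparator sequence z_1,…,z_T ∈ D with path variation V = ∑_{t=2}^T ‖z_t − z_{t−1}‖ and every V̄ > 0, the dynamic regret satisfies ∑_{t=1}^T (f_t(x_t) − f_t(z_t)) ≤ (V/V̄ + 1)·R + G·T·V̄. -/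
/-- Lemma 2 (dynamic regret of strongly adaptive iterates, conditional form):
if the iterates `x` have uniform interval static regret at most `R` and the losses are
`G`-Lipschitz on `D`, then for any comparator sequence `z` in `D` with path variation
`V = ∑_{t=2}^T ‖z t - z (t-1)‖` and any `Vbar > 0`, the dynamic regret is at most
`(V / Vbar + 1) * R + G * T * Vbar`. -/
theorem strongly_adaptive_dynamic_regret {E : Type*} [NormedAddCommGroup E] [NormedSpace ℝ E]
    (D : Set E) (T : ℕ) (hT : 1 ≤ T) (G R Vbar : ℝ) (hG : 0 ≤ G) (hR : 0 ≤ R)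
    (hVbar : 0 < Vbar) (f : ℕ → E → ℝ)
    (hlip : ∀ t ∈ Finset.Icc 1 T, ∀ x ∈ D, ∀ y ∈ D, |f t x - f t y| ≤ G * ‖x - y‖)
    (x : ℕ → E) (hx : ∀ t ∈ Finset.Icc 1 T, x t ∈ D)
    (hSA : ∀ s e : ℕ, 1 ≤ s → s ≤ e → e ≤ T → ∀ u ∈ D,
      ∑ t ∈ Finset.Icc s e, (f t (x t) - f t u) ≤ R)
    (z : ℕ → E) (hz : ∀ t ∈ Finset.Icc 1 T, z t ∈ D) :
    ∑ t ∈ Finset.Icc 1 T, (f t (x t) - f t (z t)) ≤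
      ((∑ t ∈ Finset.Icc 2 T, ‖z t - z (t - 1)‖) / Vbar + 1) * R + G * T * Vbar := by
  classical
  set V : ℕ → ℕ → ℝ := fun s e => ∑ t ∈ Finset.Icc (s+1) e, ‖z t - z (t-1)‖ with hV
  have Vnonneg : ∀ s e, 0 ≤ V s e := fun s e =>
    Finset.sum_nonneg fun t _ => norm_nonneg _
  -- telescoping triangle inequality
  have tele : ∀ s t : ℕ, s ≤ t → ‖z s - z t‖ ≤ V s t := by
    intro s t hst
    induction t, hst using Nat.le_induction with
    | base => simp [hV]
    | succ t ht ih =>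
      have h1 : ‖z s - z (t+1)‖ ≤ ‖z s - z t‖ + ‖z t - z (t+1)‖ := by
        have := dist_triangle (z s) (z t) (z (t+1))
        simpa [dist_eq_norm] using this
      have h2 : V s (t+1) = V s t + ‖z (t+1) - z t‖ := by
        rw [hV]
        simp only
        rw [Finset.sum_Icc_succ_top (by omega : s+1 ≤ t+1)]
        simp
      rw [h2]
      have : ‖z t - z (t+1)‖ = ‖z (t+1) - z t‖ := norm_sub_rev _ _
      linarith
  -- monotonicity of V in the endpoint
  have Vmono : ∀ s e e', e ≤ e' → V s e ≤ V s e' := by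
    intro s e e' h
    apply Finset.sum_le_sum_of_subset_of_nonneg
    · exact Finset.Icc_subset_Icc_right h
    · intro _ _ _; exact norm_nonneg _
  -- interval bound against fixed comparator z s
  have interval : ∀ s m : ℕ, 1 ≤ s → s ≤ m → m ≤ T → V s m ≤ Vbar →
      ∑ t ∈ Finset.Icc s m, (f t (x t) - f t (z t)) ≤
        R + G * ((m : ℝ) - s + 1) * Vbar := by
    intro s m hs1 hsm hmT hvar
    have hzs : z s ∈ D := hz s (Finset.mem_Icc.mpr ⟨hs1, le_trans hsm hmT⟩)
    have split : ∑ t ∈ Finset.Icc s m, (f t (x t) - f t (z t)) =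
        (∑ t ∈ Finset.Icc s m, (f t (x t) - f t (z s)))
        + ∑ t ∈ Finset.Icc s m, (f t (z s) - f t (z t)) := by
      rw [← Finset.sum_add_distrib]; apply Finset.sum_congr rfl; intro t _; ring
    rw [split]
    have h1 : ∑ t ∈ Finset.Icc s m, (f t (x t) - f t (z s)) ≤ R :=
      hSA s m hs1 hsm hmT (z s) hzs
    have h2 : ∑ t ∈ Finset.Icc s m, (f t (z s) - f t (z t)) ≤
        (Finset.Icc s m).card * (G * Vbar) := by
      have hb : ∀ t ∈ Finset.Icc s m, f t (z s) - f t (z t) ≤ G * Vbar := by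
        intro t htm
        have htm' := Finset.mem_Icc.mp htm
        have ht1T : t ∈ Finset.Icc 1 T := Finset.mem_Icc.mpr ⟨le_trans hs1 htm'.1, le_trans htm'.2 hmT⟩
        have hzt : z t ∈ D := hz t ht1T
        have hle : ‖z s - z t‖ ≤ Vbar :=
          le_trans (tele s t htm'.1) (le_trans (Vmono s t m htm'.2) hvar)
        calc f t (z s) - f t (z t) ≤ |f t (z s) - f t (z t)| := le_abs_self _
          _ ≤ G * ‖z s - z t‖ := hlip t ht1T (z s) hzs (z t) hzt
          _ ≤ G * Vbar := mul_le_mul_of_nonneg_left hle hG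
      calc ∑ t ∈ Finset.Icc s m, (f t (z s) - f t (z t))
          ≤ ∑ _t ∈ Finset.Icc s m, (G * Vbar) := Finset.sum_le_sum hb
        _ = (Finset.Icc s m).card * (G * Vbar) := by
            rw [Finset.sum_const, nsmul_eq_mul]
    have hcard : ((Finset.Icc s m).card : ℝ) = (m : ℝ) - s + 1 := by
      rw [Nat.card_Icc]
      push_cast [Nat.cast_sub (by omega : s ≤ m + 1)]
      ring
    calc _ ≤ R + (Finset.Icc s m).card * (G * Vbar) := by
            apply add_le_add h1
            simpa using h2
      _ = R + G * ((m : ℝ) - s + 1) * Vbar := by rw [hcard]; ring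
  -- simple case: whole-interval variation small
  have case1 : ∀ s : ℕ, 1 ≤ s → s ≤ T → V s T ≤ Vbar →
      ∑ t ∈ Finset.Icc s T, (f t (x t) - f t (z t)) ≤
        (V s T / Vbar + 1) * R + G * ((T : ℝ) - s + 1) * Vbar := by
    intro s hs1 hsT hvar
    have h := interval s T hs1 hsT le_rfl hvar
    have hge : R ≤ (V s T / Vbar + 1) * R := by
      have : 0 ≤ V s T / Vbar := div_nonneg (Vnonneg s T) (le_of_lt hVbar)
      nlinarith
    linarith
  -- main induction
  have key : ∀ n s : ℕ, 1 ≤ s → s ≤ T → T - s ≤ n →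
      ∑ t ∈ Finset.Icc s T, (f t (x t) - f t (z t)) ≤
        (V s T / Vbar + 1) * R + G * ((T : ℝ) - s + 1) * Vbar := by
    intro n
    induction n with
    | zero =>
      intro s hs1 hsT h0
      have hsT' : s = T := by omega
      apply case1 s hs1 hsT
      subst hsT'
      have : V s s = 0 := by
        rw [hV]; simp [Finset.Icc_eq_empty (by omega : ¬ s + 1 ≤ s)]
      rw [this]; exact le_of_lt hVbar
    | succ n ih =>
      intro s hs1 hsT hn
      by_cases hvar : V s T ≤ Vbar
      · exact case1 s hs1 hsT hvar
      · push_neg at hvar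
        have hex : ∃ e, Vbar < V s e := ⟨T, hvar⟩
        set e := Nat.find hex with he
        have hVe : Vbar < V s e := Nat.find_spec hex
        have hmin : ∀ e' < e, ¬ Vbar < V s e' := fun e' h => Nat.find_min hex h
        have heT : e ≤ T := Nat.find_le hvar
        have hse : s < e := by
          by_contra h
          push_neg at h
          have : V s e = 0 := by
            rw [hV]; simp [Finset.Icc_eq_empty (by omega : ¬ s + 1 ≤ e)]
          rw [this] at hVe; linarith
        set m := e - 1 with hm
        have hem : e = m + 1 := by omega
        have hsm : s ≤ m := by omega
        have hmT : m < T := by omega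
        have hVsm : V s m ≤ Vbar := not_lt.mp (hmin m (by omega))
        -- split the sum
        have hsplit : ∑ t ∈ Finset.Icc s T, (f t (x t) - f t (z t)) =
            (∑ t ∈ Finset.Icc s m, (f t (x t) - f t (z t)))
            + ∑ t ∈ Finset.Icc (m+1) T, (f t (x t) - f t (z t)) := by
          rw [← Finset.sum_union]
          · congr 1
            ext a
            simp only [Finset.mem_union, Finset.mem_Icc]
            omega
          · rw [Finset.disjoint_left]
            intro a ha hb
            have := Finset.mem_Icc.mp ha
            have := Finset.mem_Icc.mp hb
            omega
        -- variation decomposition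
        have hVdecomp : V s T = V s (m+1) + V (m+1) T := by
          rw [hV]
          simp only
          rw [← Finset.sum_union]
          · congr 1
            ext a
            simp only [Finset.mem_union, Finset.mem_Icc]
            omega
          · rw [Finset.disjoint_left]
            intro a ha hb
            have := Finset.mem_Icc.mp ha
            have := Finset.mem_Icc.mp hb
            omega
        have hVbig : Vbar + V (m+1) T ≤ V s T := by
          rw [hVdecomp, ← hem]
          linarith [hVe]
        have h1 := interval s m hs1 hsm (le_of_lt hmT) hVsm
        have h2 := ih (m+1) (by omega) (by omega) (by omega)
        rw [hsplit]
        have hdiv : V (m+1) T / Vbar + 1 ≤ V s T / Vbar := by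
          rw [div_add' _ _ _ (ne_of_gt hVbar)]
          exact (div_le_div_iff_of_pos_right hVbar).mpr (by linarith)
        have hmul : (V (m+1) T / Vbar + 2) * R ≤ (V s T / Vbar + 1) * R :=
          mul_le_mul_of_nonneg_right (by linarith) hR
        push_cast at h2
        nlinarith [h1, h2, hmul]
  have hfin := key T 1 le_rfl hT (by omega)
  have : V 1 T = ∑ t ∈ Finset.Icc 2 T, ‖z t - z (t-1)‖ := by rw [hV]
  rw [this] at hfin
  push_cast at hfin
  have e1 : G * ((T : ℝ) - 1 + 1) * Vbar = G * T * Vbar := by ring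
  rw [e1] at hfin
  exact hfin
end

section
/- Core of Theorems 1 and 2 (strongly adaptive ⇒ √(T·V) dynamic regret): Let E be a real normed vector space, D ⊆ E, T ≥ 1, G ≥ 0, R ≥ 0, and let f_1,…,f_T : E → ℝ each be G-Lipschitz on D. Let x_1,…,x_T ∈ D have uniform interval static regret at most R (i.e., for every 1 ≤ s ≤ e ≤ T and every u ∈ D, ∑_{t=s}^e (f_t(x_t) − f_t(u)) ≤ R). Then for every comparator sequence z_1,…,z_T ∈ D with path variation V = ∑_{t=2}^T ‖z_t − z_{t−1}‖, the dynamic regret satisfies ∑_{t=1}^T (f_t(x_t) − f_t(z_t)) ≤ 2·√(G·T·V·R) + R. -/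
/-!
Cut the rounds `1, …, T` into `k` consecutive blocks of at most `m + 1` rounds. On a block
starting at round `s`, compare with the fixed point `z s`: the static regret against it is at
most `R`, and by Lipschitzness every later round of the block costs at most `G` times the
variation of `z` inside the block. Summing over blocks bounds the dynamic regret by
`k * R + G * m * V`. For `G V > 0` the choice `m = ⌊√(G T V R) / (G V)⌋`, `k = T / (m + 1) + 1`
gives `G * m * V ≤ √(G T V R)` and `k * R ≤ √(G T V R) + R`; for `G V = 0` one block suffices.
-/

open Finset

section PathVariation

variable {E : Type*} [SeminormedAddCommGroup E]

def pathVariation (z : ℕ → E) (s e : ℕ) : ℝ := ∑ j ∈ Ioc s e, ‖z j - z (j - 1)‖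

theorem pathVariation_nonneg (z : ℕ → E) (s e : ℕ) : 0 ≤ pathVariation z s e :=
  sum_nonneg fun _ _ => norm_nonneg _

theorem norm_sub_le_pathVariation (z : ℕ → E) {s t : ℕ} (hst : s ≤ t) :
    ‖z t - z s‖ ≤ pathVariation z s t := by
  induction t, hst using Nat.le_induction with
  | base => simp [pathVariation]
  | succ t hst ih =>
    rw [pathVariation] at ih ⊢
    rw [sum_Ioc_succ_top hst, Nat.add_sub_cancel]
    linarith [norm_sub_le_norm_sub_add_norm_sub (z (t + 1)) (z t) (z s), ih]

theorem pathVariation_mono_right (z : ℕ → E) (s : ℕ) {e e' : ℕ} (he : e ≤ e') :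
    pathVariation z s e ≤ pathVariation z s e' :=
  sum_le_sum_of_subset_of_nonneg (Ioc_subset_Ioc_right he) fun _ _ _ => norm_nonneg _

theorem sum_regret_le_add_mul_pathVariation {D : Set E} {f : ℕ → E → ℝ} {x z : ℕ → E}
    {G R : ℝ} {s e : ℕ} (hG : 0 ≤ G) (hse : s ≤ e)
    (hlip : ∀ t ∈ Icc s e, ∀ x ∈ D, ∀ y ∈ D, |f t x - f t y| ≤ G * ‖x - y‖)
    (hz : ∀ t ∈ Icc s e, z t ∈ D)
    (hstatic : ∀ u ∈ D, ∑ t ∈ Icc s e, (f t (x t) - f t u) ≤ R) :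
    ∑ t ∈ Icc s e, (f t (x t) - f t (z t)) ≤ R + G * (e - s : ℕ) * pathVariation z s e := by
  have hzs : z s ∈ D := hz s (left_mem_Icc.2 hse)
  have hdrift : ∀ t ∈ Ioc s e, f t (z s) - f t (z t) ≤ G * pathVariation z s e := by
    intro t ht
    have ht' := Ioc_subset_Icc_self ht
    calc f t (z s) - f t (z t) ≤ G * ‖z t - z s‖ := by
          rw [norm_sub_rev]; exact (le_abs_self _).trans (hlip t ht' _ hzs _ (hz t ht'))
      _ ≤ G * pathVariation z s e := by
          gcongr
          exact (norm_sub_le_pathVariation z (mem_Ioc.1 ht).1.le).trans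
            (pathVariation_mono_right z s (mem_Ioc.1 ht).2)
  have hdrift_sum : ∑ t ∈ Icc s e, (f t (z s) - f t (z t)) =
      ∑ t ∈ Ioc s e, (f t (z s) - f t (z t)) := by
    rw [Icc_eq_cons_Ioc hse, sum_cons, sub_self, zero_add]
  calc ∑ t ∈ Icc s e, (f t (x t) - f t (z t))
      = ∑ t ∈ Icc s e, (f t (x t) - f t (z s)) + ∑ t ∈ Icc s e, (f t (z s) - f t (z t)) := by
        rw [← sum_add_distrib]; exact sum_congr rfl fun t _ => by ring
    _ = ∑ t ∈ Icc s e, (f t (x t) - f t (z s)) + ∑ t ∈ Ioc s e, (f t (z s) - f t (z t)) := by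
        rw [hdrift_sum]
    _ ≤ R + #(Ioc s e) • (G * pathVariation z s e) :=
        add_le_add (hstatic _ hzs) (sum_le_card_nsmul _ _ _ hdrift)
    _ = R + G * (e - s : ℕ) * pathVariation z s e := by rw [Nat.card_Ioc, nsmul_eq_mul]; ring

end PathVariation

theorem sum_Ioc_le_of_forall_block_le {r w : ℕ → ℝ} {T m : ℕ} {R C : ℝ} (hR : 0 ≤ R)
    (hC : 0 ≤ C) (hw : ∀ j, 0 ≤ w j)
    (hblock : ∀ a b, a < b → b ≤ T → b ≤ a + (m + 1) →
      ∑ t ∈ Ioc a b, r t ≤ R + C * ∑ j ∈ Ioc (a + 1) b, w j)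
    (k a : ℕ) (hk : T ≤ a + k * (m + 1)) :
    ∑ t ∈ Ioc a T, r t ≤ k * R + C * ∑ j ∈ Ioc (a + 1) T, w j := by
  induction k generalizing a with
  | zero =>
    simp [Ioc_eq_empty_of_le (show T ≤ a by omega), Ioc_eq_empty_of_le (show T ≤ a + 1 by omega)]
  | succ k ih =>
    rcases le_or_gt T a with hTa | haT
    · simp only [Ioc_eq_empty_of_le hTa, Ioc_eq_empty_of_le (show T ≤ a + 1 by omega), sum_empty,
        mul_zero, add_zero]
      positivity
    set b := min (a + (m + 1)) T
    have hab : a < b := by omega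
    have hbT : b ≤ T := min_le_right _ _
    have hw_split : ∑ j ∈ Ioc (a + 1) b, w j + ∑ j ∈ Ioc (b + 1) T, w j ≤
        ∑ j ∈ Ioc (a + 1) T, w j := by
      rw [← sum_Ioc_consecutive w hab hbT]
      exact add_le_add_right
        (sum_le_sum_of_subset_of_nonneg (Ioc_subset_Ioc_left b.le_succ) fun j _ _ => hw j) _
    calc ∑ t ∈ Ioc a T, r t = ∑ t ∈ Ioc a b, r t + ∑ t ∈ Ioc b T, r t :=
          (sum_Ioc_consecutive r hab.le hbT).symm
      _ ≤ (R + C * ∑ j ∈ Ioc (a + 1) b, w j) + (k * R + C * ∑ j ∈ Ioc (b + 1) T, w j) :=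
          add_le_add (hblock a b hab hbT (min_le_left _ _))
            (ih b (by rw [add_one_mul] at hk; omega))
      _ ≤ (k + 1 : ℕ) * R + C * ∑ j ∈ Ioc (a + 1) T, w j := by
          push_cast
          linarith [mul_le_mul_of_nonneg_left hw_split hC]

theorem exists_blocks_mul_add_le_two_sqrt (T : ℕ) {a b : ℝ} (ha : 0 ≤ a) (hb : 0 ≤ b) :
    ∃ k m : ℕ, T ≤ k * (m + 1) ∧ k * a + m * b ≤ 2 * √(T * a * b) + a := by
  rcases hb.eq_or_lt with rfl | hb
  · exact ⟨1, T, by omega, by simp⟩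
  set y := √(T * a * b)
  have hy : 0 ≤ y := Real.sqrt_nonneg _
  have hy2 : y * y = T * a * b := Real.mul_self_sqrt (by positivity)
  set m := ⌊y / b⌋₊
  refine ⟨T / (m + 1) + 1, m, by
    rw [add_one_mul]; exact (Nat.lt_div_mul_add m.succ_pos).le, ?_⟩
  have hspacing : m * b ≤ y := (le_div_iff₀ hb).1 (Nat.floor_le (by positivity))
  have hblocks : ((T / (m + 1) : ℕ) : ℝ) * a ≤ y := by
    have hTa : (T : ℝ) * a = y * (y / b) := by field_simp; linarith
    calc ((T / (m + 1) : ℕ) : ℝ) * a ≤ T / (m + 1) * a := by gcongr; exact_mod_cast Nat.cast_div_le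
      _ ≤ y := by
        rw [div_mul_eq_mul_div, div_le_iff₀ (by positivity), hTa]
        exact mul_le_mul_of_nonneg_left (Nat.lt_floor_add_one _).le hy
  push_cast
  linarith

theorem strongly_adaptive_sqrt_TV_dynamic_regret_general {E : Type*}
    [NormedAddCommGroup E]
    (D : Set E) (T : ℕ) (G R : ℝ) (hG : 0 ≤ G) (hR : 0 ≤ R)
    (f : ℕ → E → ℝ)
    (hlip : ∀ t ∈ Finset.Icc 1 T, ∀ x ∈ D, ∀ y ∈ D, |f t x - f t y| ≤ G * ‖x - y‖)
    (x : ℕ → E)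
    (hSA : ∀ s e : ℕ, 1 ≤ s → s ≤ e → e ≤ T → ∀ u ∈ D,
      ∑ t ∈ Finset.Icc s e, (f t (x t) - f t u) ≤ R)
    (z : ℕ → E) (hz : ∀ t ∈ Finset.Icc 1 T, z t ∈ D) :
    ∑ t ∈ Finset.Icc 1 T, (f t (x t) - f t (z t)) ≤
      2 * Real.sqrt (G * T * (∑ t ∈ Finset.Icc 2 T, ‖z t - z (t - 1)‖) * R) + R := by
  obtain ⟨k, m, hcover, hkm⟩ := exists_blocks_mul_add_le_two_sqrt T hR
    (mul_nonneg hG (pathVariation_nonneg z 1 T))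
  have hblock : ∀ a b, a < b → b ≤ T → b ≤ a + (m + 1) →
      ∑ t ∈ Ioc a b, (f t (x t) - f t (z t)) ≤ R + G * m * pathVariation z (a + 1) b := by
    intro a b hab hbT hbm
    have hsub : Icc (a + 1) b ⊆ Icc 1 T := Icc_subset_Icc (by omega) hbT
    rw [← Icc_add_one_left_eq_Ioc]
    calc _ ≤ R + G * (b - (a + 1) : ℕ) * pathVariation z (a + 1) b :=
          sum_regret_le_add_mul_pathVariation hG hab (fun t ht => hlip t (hsub ht))
            (fun t ht => hz t (hsub ht)) (hSA (a + 1) b (by omega) hab hbT)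
      _ ≤ R + G * m * pathVariation z (a + 1) b := by
          gcongr
          · exact pathVariation_nonneg z _ _
          · omega
  have hregret : ∑ t ∈ Icc 1 T, (f t (x t) - f t (z t)) ≤ k * R + G * m * pathVariation z 1 T := by
    have := sum_Ioc_le_of_forall_block_le hR (mul_nonneg hG m.cast_nonneg)
      (fun j => norm_nonneg (z j - z (j - 1))) hblock k 0 (by omega)
    rwa [← Icc_add_one_left_eq_Ioc, zero_add] at this
  have hV : ∑ t ∈ Icc 2 T, ‖z t - z (t - 1)‖ = pathVariation z 1 T := by
    rw [pathVariation, ← Icc_add_one_left_eq_Ioc]; rfl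
  rw [hV, show G * T * pathVariation z 1 T * R = T * R * (G * pathVariation z 1 T) by ring]
  linarith

/-- Core of Theorems 1 and 2: strongly adaptive iterates (uniform interval static regret
at most `R`) with `G`-Lipschitz losses enjoy dynamic regret at most
`2 * √(G * T * V * R) + R` against any comparator sequence with path variation `V`. -/
theorem strongly_adaptive_sqrt_TV_dynamic_regret {E : Type*}
    [NormedAddCommGroup E] [NormedSpace ℝ E]
    (D : Set E) (T : ℕ) (hT : 1 ≤ T) (G R : ℝ) (hG : 0 ≤ G) (hR : 0 ≤ R)
    (f : ℕ → E → ℝ)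
    (hlip : ∀ t ∈ Finset.Icc 1 T, ∀ x ∈ D, ∀ y ∈ D, |f t x - f t y| ≤ G * ‖x - y‖)
    (x : ℕ → E) (hx : ∀ t ∈ Finset.Icc 1 T, x t ∈ D)
    (hSA : ∀ s e : ℕ, 1 ≤ s → s ≤ e → e ≤ T → ∀ u ∈ D,
      ∑ t ∈ Finset.Icc s e, (f t (x t) - f t u) ≤ R)
    (z : ℕ → E) (hz : ∀ t ∈ Finset.Icc 1 T, z t ∈ D) :
    ∑ t ∈ Finset.Icc 1 T, (f t (x t) - f t (z t)) ≤
      2 * Real.sqrt (G * T * (∑ t ∈ Finset.Icc 2 T, ‖z t - z (t - 1)‖) * R) + R :=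
  strongly_adaptive_sqrt_TV_dynamic_regret_general D T G R hG hR f hlip x hSA z hz
end

section
/- Strong convexity plus bounded gradients implies exp-concavity: Let H be a real inner product space, D ⊆ H, and let f : H → ℝ and g : H → H. Let Hc > 0 and G > 0. Assume (i) for all x, y ∈ D, f(y) ≥ f(x) + ⟨g(x), y − x⟩ + (Hc/2)‖y − x‖² (i.e., f is Hc-strongly convex on D with 'gradient' g), and (ii) ‖g(x)‖ ≤ G for all x ∈ D. Then for all x, y ∈ D, f(y) ≥ f(x) + ⟨g(x), y − x⟩ + (Hc/(2G²))·⟨g(x), y − x⟩², i.e., f is (Hc/G²)-exp-concave on D. -/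
open RealInnerProductSpace

/-- Strong convexity plus bounded gradients implies exp-concavity: if `f` is
`Hc`-strongly convex on `D` with gradient map `g` and `‖g x‖ ≤ G` on `D`, then `f` is
`Hc / G²`-exp-concave on `D`. -/
theorem strongly_convex_bounded_grad_exp_concave {H : Type*}
    [NormedAddCommGroup H] [InnerProductSpace ℝ H]
    (D : Set H) (f : H → ℝ) (g : H → H) (Hc G : ℝ) (hHc : 0 < Hc) (hG : 0 < G)
    (hsc : ∀ x ∈ D, ∀ y ∈ D, f y ≥ f x + ⟪g x, y - x⟫ + Hc / 2 * ‖y - x‖ ^ 2)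
    (hbd : ∀ x ∈ D, ‖g x‖ ≤ G) :
    ∀ x ∈ D, ∀ y ∈ D,
      f y ≥ f x + ⟪g x, y - x⟫ + (Hc / (2 * G ^ 2)) * ⟪g x, y - x⟫ ^ 2 := by
  intro x hx y hy
  have hsc' := hsc x hx y hy
  have hcs : |⟪g x, y - x⟫| ≤ ‖g x‖ * ‖y - x‖ := abs_real_inner_le_norm _ _
  have hsq : ⟪g x, y - x⟫ ^ 2 ≤ ‖g x‖ ^ 2 * ‖y - x‖ ^ 2 := by
    have h := pow_le_pow_left₀ (abs_nonneg _) hcs 2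
    rwa [sq_abs, mul_pow] at h
  have hg := hbd x hx
  have h2 : ‖g x‖ ^ 2 ≤ G ^ 2 := by nlinarith [norm_nonneg (g x)]
  have key : (Hc / (2 * G ^ 2)) * ⟪g x, y - x⟫ ^ 2 ≤ Hc / 2 * ‖y - x‖ ^ 2 := by
    have h3 : ⟪g x, y - x⟫ ^ 2 ≤ G ^ 2 * ‖y - x‖ ^ 2 := by
      nlinarith [sq_nonneg ‖y - x‖]
    rw [div_mul_eq_mul_div, div_le_iff₀ (by positivity)]
    nlinarith
  linarith
end

section
/- Theorem 5 (lower bound on penalized regret for online kernel regression, matrix/strategy form): Let T ≥ 2, let K be a T×T real symmetric positive semidefinite matrix, let a > 0, let κ² = max_i K_{ii}, and set B = √(6(1 + κ²/a)·log T). Let a prediction strategy be given by measurable maps σ_t : ℝ^{t−1} → ℝ for t = 1,…,T, so that on a label sequence y ∈ ℝ^T the learner's prediction at round t is ŷ_t = σ_t(y_1,…,y_{t−1}). Then there exists y ∈ ℝ^T with |y_i| ≤ B for all i such that ∑_{t=1}^T (ŷ_t − y_t)² − inf_{α ∈ ℝ^T} ( ‖y − Kα‖² + a·αᵀKα ) ≥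 log det(I + a⁻¹K) + 2·log(1 − 1/T). -/
/-!
Draw the labels as `y = B ε` with `ε` uniform on `{±1}^T`. The prediction at round `t` does not
depend on `ε_t`, so each round costs at least `B²` on average and the learner's cumulative loss
averages at least `T B²`. Plugging `α = (K + a I)⁻¹ y` into the comparator bounds it by
`a yᵀ (K + a I)⁻¹ y`, whose average is `a B² tr (K + a I)⁻¹`. Hence the average penalized regret is
at least `B² ∑ λᵢ / (a + λᵢ)` over the eigenvalues `λᵢ ≤ tr K ≤ T κ²` of `K`, and `B` is chosen so
that each term dominates `log (1 + λᵢ / a)`. Some sign vector does at least as well as the average,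
and `log (1 - 1/T) ≤ 0`.
-/

open Matrix

lemma Real.log_one_add_le_mul_div_one_add {T c x : ℝ} (hT : 2 ≤ T) (hx : 0 ≤ x)
    (hxT : x ≤ T * c) :
    Real.log (1 + x) ≤ 6 * (1 + c) * Real.log T * (x / (1 + x)) := by
  have hc : 0 ≤ c := nonneg_of_mul_nonneg_right (hx.trans hxT) (by linarith)
  have hlogT : 0.6931 ≤ Real.log T :=
    (Real.log_two_gt_d9.le.trans' (by norm_num)).trans (Real.log_le_log two_pos hT)
  rcases le_total x 1 with hx1 | hx1
  · calc Real.log (1 + x) ≤ x := by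
          linarith [Real.log_le_sub_one_of_pos (by positivity : 0 < 1 + x)]
      _ ≤ 2 * (x / (1 + x)) := by
        rw [mul_div_assoc', le_div_iff₀ (by positivity)]; nlinarith
      _ ≤ 6 * (1 + c) * Real.log T * (x / (1 + x)) := by
        gcongr; nlinarith
  · calc Real.log (1 + x) ≤ Real.log (T * (1 + c)) :=
          Real.log_le_log (by positivity) (by nlinarith)
      _ = Real.log T + Real.log (1 + c) := Real.log_mul (by positivity) (by positivity)
      _ ≤ Real.log T + c := by
          linarith [Real.log_le_sub_one_of_pos (by positivity : 0 < 1 + c)]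
      _ ≤ 6 * (1 + c) * Real.log T * (1 / 2) := by nlinarith
      _ ≤ 6 * (1 + c) * Real.log T * (x / (1 + x)) := by
        refine mul_le_mul_of_nonneg_left ?_ (by positivity)
        rw [div_le_div_iff₀ two_pos (by positivity)]; linarith

namespace Matrix.IsHermitian
variable {n 𝕜 : Type*} [RCLike 𝕜] [Fintype n] [DecidableEq n] {A : Matrix n n 𝕜}

lemma trace_cfc (hA : A.IsHermitian) (f : ℝ → ℝ) :
    (cfc f A).trace = ∑ i, (f (hA.eigenvalues i) : 𝕜) := by
  rw [hA.cfc_eq, IsHermitian.cfc, Unitary.conjStarAlgAut_apply, trace_mul_cycle,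
    Unitary.coe_star_mul_self, one_mul, trace_diagonal]
  rfl

lemma det_cfc (hA : A.IsHermitian) (f : ℝ → ℝ) :
    (cfc f A).det = ∏ i, (f (hA.eigenvalues i) : 𝕜) := by
  rw [hA.cfc_eq, IsHermitian.cfc, Unitary.conjStarAlgAut_apply, det_mul_comm, ← mul_assoc,
    Unitary.coe_star_mul_self, one_mul, det_diagonal]
  rfl

end Matrix.IsHermitian

section
variable {ι : Type*} [Fintype ι] [DecidableEq ι] {K : Matrix ι ι ℝ}

lemma Matrix.IsHermitian.one_add_smul_eq_cfc (hK : K.IsHermitian) (c : ℝ) :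
    1 + c • K = cfc (fun x => 1 + c * x) K := by
  rw [cfc_const_add 1 _ K, cfc_const_mul_id c K, map_one]

lemma Matrix.PosSemidef.eigenvalues_le_trace (hK : K.PosSemidef) (i : ι) :
    hK.1.eigenvalues i ≤ K.trace := by
  rw [hK.1.trace_eq_sum_eigenvalues]
  exact Finset.single_le_sum (fun j _ => hK.eigenvalues_nonneg j) (Finset.mem_univ i)

lemma Matrix.PosSemidef.add_smul_one_mul_cfc_inv (hK : K.PosSemidef) {a : ℝ} (ha : 0 < a) :
    (K + a • 1) * cfc (fun x => (a + x)⁻¹) K = 1 := by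
  have hsa : IsSelfAdjoint K := hK.1
  have hK_eq : K + a • 1 = cfc (fun x => a + x) K := by
    rw [cfc_const_add a _ K, cfc_id' ℝ K, Algebra.algebraMap_eq_smul_one, add_comm]
  rw [hK_eq, ← cfc_mul _ _ K (by fun_prop) (K.finite_real_spectrum.continuousOn _)]
  refine (cfc_congr fun x hx => ?_).trans (cfc_const_one ℝ K)
  obtain ⟨i, rfl⟩ := hK.1.spectrum_real_eq_range_eigenvalues ▸ hx
  exact mul_inv_cancel₀ (by linarith [hK.eigenvalues_nonneg i])

lemma Matrix.PosSemidef.log_det_one_add_inv_smul_le (hK : K.PosSemidef) {a κ2 : ℝ}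
    (ha : 0 < a) (hdiag : ∀ i, K i i ≤ κ2) (hι : 2 ≤ Fintype.card ι) :
    Real.log (1 + a⁻¹ • K).det ≤ 6 * (1 + κ2 / a) * Real.log (Fintype.card ι) *
      (Fintype.card ι - a * (cfc (fun x => (a + x)⁻¹) K).trace) := by
  set C := 6 * (1 + κ2 / a) * Real.log (Fintype.card ι)
  have htrace : K.trace ≤ Fintype.card ι * κ2 := by
    simpa [Matrix.trace] using Finset.sum_le_sum fun i (_ : i ∈ Finset.univ) => hdiag i
  rw [hK.1.one_add_smul_eq_cfc, hK.1.det_cfc, hK.1.trace_cfc]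
  simp only [RCLike.ofReal_real_eq_id, id]
  set μ := hK.1.eigenvalues
  have hμ0 : ∀ i, 0 ≤ μ i := hK.eigenvalues_nonneg
  have hterm (i : ι) : Real.log (1 + a⁻¹ * μ i) ≤ C * (1 - a * (a + μ i)⁻¹) := by
    have hμ : μ i / a ≤ Fintype.card ι * (κ2 / a) := by
      rw [div_le_iff₀ ha, mul_assoc, div_mul_cancel₀ _ ha.ne']
      exact (hK.eigenvalues_le_trace i).trans htrace
    have : a + μ i ≠ 0 := by linarith [hμ0 i]
    convert Real.log_one_add_le_mul_div_one_add (by exact_mod_cast hι)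
      (div_nonneg (hμ0 i) ha.le) hμ using 3
    · ring
    · field_simp; ring
  calc Real.log (∏ i, (1 + a⁻¹ * μ i)) = ∑ i, Real.log (1 + a⁻¹ * μ i) :=
        Real.log_prod fun i _ => by have := hμ0 i; positivity
    _ ≤ ∑ i, C * (1 - a * (a + μ i)⁻¹) := Finset.sum_le_sum fun i _ => hterm i
    _ = C * (Fintype.card ι - a * ∑ i, (a + μ i)⁻¹) := by
      rw [← Finset.mul_sum, Finset.sum_sub_distrib, Finset.mul_sum]; simp

end

section SignVectors
variable {ι : Type*}

def signVec (B : ℝ) (s : ι → Bool) : ι → ℝ := fun i => if s i then B else -B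

lemma signVec_sq (B : ℝ) (s : ι → Bool) (i : ι) : signVec B s i ^ 2 = B ^ 2 := by
  cases s i <;> simp [signVec]

lemma abs_signVec (B : ℝ) (s : ι → Bool) (i : ι) : |signVec B s i| = |B| := by
  cases h : s i <;> simp [signVec, h]

variable [DecidableEq ι]

def flipAt (i : ι) : Equiv.Perm (ι → Bool) :=
  Function.Involutive.toPerm (fun s => Function.update s i (!s i)) fun s => by
    ext j; rcases eq_or_ne j i with rfl | hj <;> simp [Function.update_of_ne, *]

lemma flipAt_apply (i : ι) (s : ι → Bool) : flipAt i s = Function.update s i (!s i) := rfl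

variable (B : ℝ)

lemma signVec_flipAt_self (i : ι) (s : ι → Bool) :
    signVec B (flipAt i s) i = -signVec B s i := by
  cases h : s i <;> simp [signVec, flipAt_apply, h]

lemma signVec_flipAt_of_ne {i j : ι} (hji : j ≠ i) (s : ι → Bool) :
    signVec B (flipAt i s) j = signVec B s j := by
  simp [signVec, flipAt_apply, Function.update_of_ne hji]

variable [Fintype ι]

lemma sum_mul_signVec_eq_zero {i : ι} {g : (ι → Bool) → ℝ}
    (hg : ∀ s, g (flipAt i s) = g s) :
    ∑ s, g s * signVec B s i = 0 := by
  have h := Equiv.sum_comp (flipAt i) fun s => g s * signVec B s i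
  simp only [hg, signVec_flipAt_self, mul_neg, Finset.sum_neg_distrib] at h
  linarith

lemma card_mul_sq_le_sum_sq_sub_signVec {i : ι} {g : (ι → Bool) → ℝ}
    (hg : ∀ s, g (flipAt i s) = g s) :
    Fintype.card (ι → Bool) * B ^ 2 ≤ ∑ s, (g s - signVec B s i) ^ 2 := by
  have hexpand : ∑ s, (g s - signVec B s i) ^ 2 =
      ∑ s, g s ^ 2 - 2 * ∑ s, g s * signVec B s i + Fintype.card (ι → Bool) * B ^ 2 := by
    simp only [sub_sq, signVec_sq, Finset.sum_add_distrib, Finset.sum_sub_distrib,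
      Finset.mul_sum, Finset.sum_const, Finset.card_univ, nsmul_eq_mul]
    ring_nf
  rw [hexpand, sum_mul_signVec_eq_zero B hg]
  linarith [Finset.sum_nonneg fun s (_ : s ∈ Finset.univ) => sq_nonneg (g s)]

lemma sum_dotProduct_mulVec_signVec (M : Matrix ι ι ℝ) :
    ∑ s, signVec B s ⬝ᵥ (M *ᵥ signVec B s) =
      Fintype.card (ι → Bool) * (B ^ 2 * M.trace) := by
  have hcross (i j : ι) : ∑ s, signVec B s i * (M i j * signVec B s j) =
      if i = j then Fintype.card (ι → Bool) * (B ^ 2 * M i i) else 0 := by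
    split_ifs with hij
    · subst hij
      simp [mul_left_comm (signVec B _ i), ← sq, signVec_sq, mul_comm]
    · rw [← sum_mul_signVec_eq_zero B (g := fun s => M i j * signVec B s j) fun s =>
        by rw [signVec_flipAt_of_ne B (Ne.symm hij)]]
      simp only [mul_comm]
  have : ∑ s, signVec B s ⬝ᵥ (M *ᵥ signVec B s) =
      ∑ i, ∑ j, ∑ s, signVec B s i * (M i j * signVec B s j) := by
    simp only [dotProduct, mulVec, Finset.mul_sum]
    rw [Finset.sum_comm]
    exact Finset.sum_congr rfl fun i _ => Finset.sum_comm
  simp [this, hcross, trace, Finset.mul_sum]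

end SignVectors

section PenalizedLoss
variable {ι : Type*} [Fintype ι] {K : Matrix ι ι ℝ} {a : ℝ}

def penalizedLoss (K : Matrix ι ι ℝ) (a : ℝ) (y α : ι → ℝ) : ℝ :=
  (y - K *ᵥ α) ⬝ᵥ (y - K *ᵥ α) + a * (α ⬝ᵥ K *ᵥ α)

lemma penalizedLoss_nonneg (hK : K.PosSemidef) (ha : 0 ≤ a) (y α : ι → ℝ) :
    0 ≤ penalizedLoss K a y α :=
  add_nonneg (Finset.sum_nonneg fun i _ => mul_self_nonneg _)
    (mul_nonneg ha (by simpa using hK.dotProduct_mulVec_nonneg α))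

lemma penalizedLoss_eq_of_mulVec_add_smul_eq {y α : ι → ℝ} (h : K *ᵥ α + a • α = y) :
    penalizedLoss K a y α = a * (α ⬝ᵥ y) := by
  have hres : y - K *ᵥ α = a • α := by rw [← h]; abel
  rw [penalizedLoss, hres, ← h]
  simp only [smul_dotProduct, dotProduct_smul, dotProduct_add, smul_eq_mul]
  ring

lemma iInf_penalizedLoss_le_resolvent [DecidableEq ι] (hK : K.PosSemidef) (ha : 0 < a)
    (y : ι → ℝ) :
    ⨅ α, penalizedLoss K a y α ≤ a * (y ⬝ᵥ (cfc (fun x => (a + x)⁻¹) K *ᵥ y)) := by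
  set α := cfc (fun x => (a + x)⁻¹) K *ᵥ y
  have hα : K *ᵥ α + a • α = y :=
    calc K *ᵥ α + a • α = (K + a • 1) *ᵥ α := by rw [add_mulVec, smul_mulVec, one_mulVec]
      _ = y := by rw [mulVec_mulVec, hK.add_smul_one_mul_cfc_inv ha, one_mulVec]
  calc ⨅ β, penalizedLoss K a y β ≤ penalizedLoss K a y α :=
        ciInf_le ⟨0, Set.forall_mem_range.2 (penalizedLoss_nonneg hK ha.le y)⟩ α
    _ = a * (y ⬝ᵥ α) := by rw [penalizedLoss_eq_of_mulVec_add_smul_eq hα, dotProduct_comm]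

end PenalizedLoss

def cumulativeLoss {T : ℕ} (σ : ∀ t : Fin T, (Fin t → ℝ) → ℝ) (y : Fin T → ℝ) : ℝ :=
  ∑ t, (σ t (fun i => y (Fin.castLE t.isLt.le i)) - y t) ^ 2

lemma card_mul_le_sum_cumulativeLoss_signVec {T : ℕ} (B : ℝ)
    (σ : ∀ t : Fin T, (Fin t → ℝ) → ℝ) :
    Fintype.card (Fin T → Bool) * (T * B ^ 2) ≤ ∑ s, cumulativeLoss σ (signVec B s) := by
  have hround (t : Fin T) : Fintype.card (Fin T → Bool) * B ^ 2 ≤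
      ∑ s, (σ t (fun i => signVec B s (Fin.castLE t.isLt.le i)) - signVec B s t) ^ 2 :=
    card_mul_sq_le_sum_sq_sub_signVec B fun s => by
      congr 1
      funext i
      exact signVec_flipAt_of_ne B (Fin.ne_of_lt (Fin.lt_def.2 i.isLt)) s
  calc (Fintype.card (Fin T → Bool) : ℝ) * (T * B ^ 2)
      = ∑ _t : Fin T, Fintype.card (Fin T → Bool) * B ^ 2 := by simp; ring
    _ ≤ ∑ t, ∑ s, (σ t (fun i => signVec B s (Fin.castLE t.isLt.le i)) - signVec B s t) ^ 2 :=
      Finset.sum_le_sum fun t _ => hround t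
    _ = ∑ s, cumulativeLoss σ (signVec B s) := Finset.sum_comm

theorem penalized_regret_lower_bound_general (T : ℕ) (hT : 2 ≤ T)
    (K : Matrix (Fin T) (Fin T) ℝ) (hK : K.PosSemidef) (a : ℝ) (ha : 0 < a)
    (κ2 : ℝ) (hκ2 : κ2 = ⨆ i, K i i)
    (B : ℝ) (hB : B = Real.sqrt (6 * (1 + κ2 / a) * Real.log T))
    (σ : ∀ t : Fin T, (Fin (t : ℕ) → ℝ) → ℝ) :
    ∃ y : Fin T → ℝ, (∀ i, |y i| ≤ B) ∧
      Real.log ((1 + a⁻¹ • K : Matrix (Fin T) (Fin T) ℝ).det) +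
          2 * Real.log (1 - 1 / (T : ℝ)) ≤
        (∑ t : Fin T, (σ t (fun i => y (Fin.castLE t.isLt.le i)) - y t) ^ 2) -
          ⨅ α : Fin T → ℝ,
            ((y - K.mulVec α) ⬝ᵥ (y - K.mulVec α) + a * (α ⬝ᵥ K.mulVec α)) := by
  have hT2 : (2 : ℝ) ≤ T := by exact_mod_cast hT
  have hdiag (i : Fin T) : K i i ≤ κ2 :=
    hκ2 ▸ le_ciSup (Set.finite_range fun j => K j j).bddAbove i
  have hκ2_nonneg : 0 ≤ κ2 := (hK.diag_nonneg (i := ⟨0, by omega⟩)).trans (hdiag _)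
  have hB2 : B ^ 2 = 6 * (1 + κ2 / a) * Real.log T := by
    rw [hB, Real.sq_sqrt]
    have := Real.log_nonneg (by linarith : (1 : ℝ) ≤ T)
    positivity
  set M := cfc (fun x => (a + x)⁻¹) K
  set N : ℝ := (Fintype.card (Fin T → Bool) : ℝ)
  have hlogdet := hK.log_det_one_add_inv_smul_le ha hdiag (by simpa using hT)
  rw [Fintype.card_fin, ← hB2] at hlogdet
  have hloss := card_mul_le_sum_cumulativeLoss_signVec B σ
  have hpen : ∑ s, ⨅ α, penalizedLoss K a (signVec B s) α ≤ N * (a * (B ^ 2 * M.trace)) :=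
    calc _ ≤ ∑ s, a * (signVec B s ⬝ᵥ (M *ᵥ signVec B s)) :=
          Finset.sum_le_sum fun s _ => iInf_penalizedLoss_le_resolvent hK ha _
      _ = N * (a * (B ^ 2 * M.trace)) := by
          rw [← Finset.mul_sum, sum_dotProduct_mulVec_signVec]; ring
  have havg : ∑ _s : Fin T → Bool, Real.log (1 + a⁻¹ • K).det ≤
      ∑ s, (cumulativeLoss σ (signVec B s) - ⨅ α, penalizedLoss K a (signVec B s) α) := by
    rw [Finset.sum_const, Finset.card_univ, nsmul_eq_mul, Finset.sum_sub_distrib]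
    linarith [mul_le_mul_of_nonneg_left hlogdet (Nat.cast_nonneg _ : 0 ≤ N)]
  obtain ⟨s, -, hs⟩ := Finset.exists_le_of_sum_le Finset.univ_nonempty havg
  have hB0 : 0 ≤ B := hB ▸ Real.sqrt_nonneg _
  refine ⟨signVec B s, fun i => by rw [abs_signVec, abs_of_nonneg hB0], ?_⟩
  have hlog : Real.log (1 - 1 / T) ≤ 0 :=
    Real.log_nonpos (sub_nonneg.2 ((div_le_one (by positivity)).2 (by linarith)))
      (sub_le_self _ (by positivity))
  exact (add_le_of_nonpos_right (by linarith)).trans hs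

/-- Theorem 5 (lower bound on penalized regret for online kernel regression,
matrix/strategy form): for any measurable prediction strategy `σ` (the prediction at
round `t` being `σ t (y 1, …, y (t-1))`), there is a label sequence `y` with
`|y i| ≤ B = √(6 (1 + κ²/a) log T)` whose penalized regret is at least
`log det (I + a⁻¹ K) + 2 log (1 - 1/T)`. -/
theorem penalized_regret_lower_bound (T : ℕ) (hT : 2 ≤ T)
    (K : Matrix (Fin T) (Fin T) ℝ) (hK : K.PosSemidef) (a : ℝ) (ha : 0 < a)
    (κ2 : ℝ) (hκ2 : κ2 = ⨆ i, K i i)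
    (B : ℝ) (hB : B = Real.sqrt (6 * (1 + κ2 / a) * Real.log T))
    (σ : ∀ t : Fin T, (Fin (t : ℕ) → ℝ) → ℝ)
    (hσ : ∀ t, Measurable (σ t)) :
    ∃ y : Fin T → ℝ, (∀ i, |y i| ≤ B) ∧
      Real.log ((1 + a⁻¹ • K : Matrix (Fin T) (Fin T) ℝ).det) +
          2 * Real.log (1 - 1 / (T : ℝ)) ≤
        (∑ t : Fin T, (σ t (fun i => y (Fin.castLE t.isLt.le i)) - y t) ^ 2) -
          ⨅ α : Fin T → ℝ,
            ((y - K.mulVec α) ⬝ᵥ (y - K.mulVec α) + a * (α ⬝ᵥ K.mulVec α)) :=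
  penalized_regret_lower_bound_general T hT K hK a ha κ2 hκ2 B hB σ
end
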